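/- Majumdar–Ghosh Hamiltonian positivity and ground states: on (C^2)^{⊗2N} with periodic boundary conditions, the operator H = Σ_{j=1}^{2N} [ (1/4)(σ⃗_j + σ⃗_{j+1} + σ⃗_{j+2})^2 − (3/4) ] is positive semidefinite, and the two dimer states |Dimer_o⟩ = ⊗_{j=1}^{N} |[2j−1, 2j]⟩ and |Dimer_e⟩ = ⊗_{j=1}^{N} |[2j, 2j+1]⟩ (tensor products of nearest-neighbor singlets) are annihilated by H; hence they are ground states with ground energy 0. -/

import Mathlib

open Matrix
open scoped ComplexOrder

noncomputable section

/-- The Pauli matrix `σˣ`. -/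
def pauliX : Matrix (Fin 2) (Fin 2) ℂ := !![0, 1; 1, 0]

/-- The Pauli matrix `σʸ`. -/
def pauliY : Matrix (Fin 2) (Fin 2) ℂ := !![0, -Complex.I; Complex.I, 0]

/-- The Pauli matrix `σᶻ`. -/
def pauliZ : Matrix (Fin 2) (Fin 2) ℂ := !![1, 0; 0, -1]

/-- The operator acting as the one-site matrix `A` on the `j`-th tensor factor
of a chain of spins labelled by `ι` and as the identity elsewhere. -/
def siteOp {ι : Type} [Fintype ι] [DecidableEq ι]
    (A : Matrix (Fin 2) (Fin 2) ℂ) (j : ι) :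
    Matrix (ι → Fin 2) (ι → Fin 2) ℂ :=
  Matrix.of fun x y => if ∀ k, k ≠ j → x k = y k then A (x j) (y j) else 0

/-- The amplitude of the two-site spin singlet `(|↑↓⟩ − |↓↑⟩)/√2`
(`0` encodes `↑`, `1` encodes `↓`). -/
def singletAmp : Fin 2 → Fin 2 → ℂ := fun a b =>
  if a = 0 ∧ b = 1 then ((1 / Real.sqrt 2 : ℝ) : ℂ)
  else if a = 1 ∧ b = 0 then ((-(1 / Real.sqrt 2) : ℝ) : ℂ) else 0

/-!
Each term `¼ (σ⃗_j + σ⃗_{j+1} + σ⃗_{j+2})² − ¾` of `H` is `B/4` for the three-site operator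
`B = (σ⃗_1 + σ⃗_2 + σ⃗_3)² − 3` placed on the window `j, j+1, j+2`. Since the total spin of three
spin-½'s is ½ or 3/2, `B` has eigenvalues `0` and `12`: `Bᴴ = B` and `B² = 12 B`, so
`B = Bᴴ B / 12 ≥ 0`. The kernel of `B` contains every state with a singlet on two of the three
sites, and for both dimer coverings every window contains a dimer bond, so each term annihilates
both dimer states. When `2N = 2` the window is not made of distinct sites and the same finite
computation is done directly on the two-site chain.
-/

open Function

section LocalOperators

variable {R S ι κ : Type*}

def siteOpOver [Fintype ι] [DecidableEq ι] [DecidableEq S] [Zero R] (A : Matrix S S R) (j : ι) :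
    Matrix (ι → S) (ι → S) R :=
  Matrix.of fun x y => if ∀ k, k ≠ j → x k = y k then A (x j) (y j) else 0

lemma map_siteOpOver [Fintype ι] [DecidableEq ι] [DecidableEq S] {T : Type*} [Zero R] [Zero T]
    (φ : R → T) (hφ : φ 0 = 0) (A : Matrix S S R) (j : ι) :
    (siteOpOver A j).map φ = siteOpOver (A.map φ) j := by
  ext x y
  simp only [siteOpOver, Matrix.map_apply, Matrix.of_apply]
  split_ifs <;> simp [hφ]

open Classical in
/-- The operator `A ⊗ 1`, with `A` acting on the sites `f i`. -/
def localOp [Zero R] (f : κ → ι) (A : Matrix (κ → S) (κ → S) R) :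
    Matrix (ι → S) (ι → S) R :=
  Matrix.of fun x y => if ∀ k ∉ Set.range f, x k = y k then A (x ∘ f) (y ∘ f) else 0

variable {f : κ → ι}

lemma extend_comp_eq_of_eqOn_compl_range {x z : ι → S} (hf : Injective f)
    (h : ∀ k ∉ Set.range f, x k = z k) : extend f (z ∘ f) x = z := by
  funext k
  by_cases hk : k ∈ Set.range f
  · obtain ⟨i, rfl⟩ := hk
    exact hf.extend_apply _ _ _
  · rw [extend_apply' _ _ _ hk, h k hk]

lemma sum_eq_sum_extend [Fintype ι] [DecidableEq ι] [Fintype κ] [DecidableEq κ] [Fintype S]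
    [AddCommMonoid R] (hf : Injective f) (x : ι → S) (g : (ι → S) → R)
    (hg : ∀ z, ¬ (∀ k ∉ Set.range f, x k = z k) → g z = 0) :
    ∑ z, g z = ∑ u, g (extend f u x) := by
  classical
  rw [← Finset.sum_filter_of_ne (p := fun z => ∀ k ∉ Set.range f, x k = z k)
    fun z _ hz => by_contra fun hc => hz (hg z hc)]
  refine Finset.sum_nbij' (· ∘ f) (extend f · x) (by simp) ?_ ?_ (fun u _ => extend_comp hf u x)
    fun z hz => ?_
  · intro u _
    simp only [Finset.mem_filter, Finset.mem_univ, true_and]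
    exact fun k hk => (extend_apply' _ _ _ hk).symm
  · intro z hz
    simp only [Finset.mem_filter, Finset.mem_univ, true_and] at hz
    exact extend_comp_eq_of_eqOn_compl_range hf hz
  · simp only [Finset.mem_filter, Finset.mem_univ, true_and] at hz
    rw [extend_comp_eq_of_eqOn_compl_range hf hz]

lemma localOp_add [AddZeroClass R] (A B : Matrix (κ → S) (κ → S) R) :
    localOp f (A + B) = localOp f A + localOp f B := by
  ext x y
  simp only [localOp, Matrix.of_apply, Matrix.add_apply]
  split_ifs <;> simp

lemma localOp_smul {α : Type*} [Zero R] [SMulZeroClass α R] (c : α)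
    (A : Matrix (κ → S) (κ → S) R) :
    localOp f (c • A) = c • localOp f A := by
  ext x y
  simp only [localOp, Matrix.of_apply, Matrix.smul_apply]
  split_ifs <;> simp

lemma localOp_conjTranspose [AddMonoid R] [StarAddMonoid R] (A : Matrix (κ → S) (κ → S) R) :
    localOp f Aᴴ = (localOp f A)ᴴ := by
  ext x y
  simp only [localOp, Matrix.of_apply, Matrix.conjTranspose_apply]
  by_cases hxy : ∀ k ∉ Set.range f, x k = y k
  · rw [if_pos hxy, if_pos fun k hk => (hxy k hk).symm]
  · rw [if_neg hxy, if_neg fun hyx => hxy fun k hk => (hyx k hk).symm, star_zero]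

lemma localOp_siteOpOver [Fintype ι] [DecidableEq ι] [Fintype κ] [DecidableEq κ] [DecidableEq S]
    [Zero R] (hf : Injective f) (A : Matrix S S R) (i : κ) :
    localOp f (siteOpOver A i) = siteOpOver A (f i) := by
  ext x y
  simp only [localOp, siteOpOver, Matrix.of_apply]
  by_cases h : ∀ k, k ≠ f i → x k = y k
  · have hout : ∀ k ∉ Set.range f, x k = y k :=
      fun k hk => h k fun he => hk ⟨i, he.symm⟩
    have hin : ∀ k, k ≠ i → (x ∘ f) k = (y ∘ f) k := fun k hk => h (f k) (hf.ne hk)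
    rw [if_pos hout, if_pos hin, if_pos h]
    rfl
  · rw [if_neg h]
    by_cases hout : ∀ k ∉ Set.range f, x k = y k
    · rw [if_pos hout, if_neg fun hin => h fun k hk => ?_]
      obtain ⟨k, rfl⟩ | hr := em (k ∈ Set.range f)
      · exact hin k fun he => hk (congrArg f he)
      · exact hout k hr
    · rw [if_neg hout]

lemma localOp_mul [Fintype ι] [DecidableEq ι] [Fintype κ] [DecidableEq κ] [Fintype S]
    [NonUnitalNonAssocSemiring R] (hf : Injective f) (A B : Matrix (κ → S) (κ → S) R) :
    localOp f (A * B) = localOp f A * localOp f B := by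
  ext x y
  simp only [localOp, Matrix.mul_apply, Matrix.of_apply]
  split_ifs with hxy
  · rw [sum_eq_sum_extend hf x _ fun z hz => by rw [if_neg hz, zero_mul]]
    refine Finset.sum_congr rfl fun u _ => ?_
    have hx : ∀ k ∉ Set.range f, x k = extend f u x k :=
      fun k hk => (extend_apply' _ _ _ hk).symm
    have hy : ∀ k ∉ Set.range f, extend f u x k = y k :=
      fun k hk => (hx k hk).symm.trans (hxy k hk)
    simp only [if_pos hx, if_pos hy, extend_comp hf]
  · refine (Finset.sum_eq_zero fun z _ => ?_).symm
    by_cases hxz : ∀ k ∉ Set.range f, x k = z k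
    · simp only [if_neg fun hzy : ∀ k ∉ Set.range f, z k = y k =>
        hxy fun k hk => (hxz k hk).trans (hzy k hk), mul_zero]
    · simp only [if_neg hxz, zero_mul]

lemma localOp_one [Fintype ι] [Fintype κ] [DecidableEq S] [NonAssocSemiring R]
    (hf : Injective f) : localOp f (1 : Matrix (κ → S) (κ → S) R) = 1 := by
  ext x y
  by_cases hxy : x = y
  · subst hxy
    simp [localOp]
  · simp only [localOp, Matrix.of_apply, Matrix.one_apply_ne hxy]
    split_ifs with hout
    · refine Matrix.one_apply_ne fun hc => hxy ?_
      rw [← extend_comp_eq_of_eqOn_compl_range hf hout, ← hc,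
        extend_comp_eq_of_eqOn_compl_range hf fun _ _ => rfl]
    · rfl

variable (R) in
def localOpAlgHom [Fintype ι] [DecidableEq ι] [Fintype κ] [DecidableEq κ] [Fintype S]
    [DecidableEq S] [CommSemiring R] (hf : Injective f) :
    Matrix (κ → S) (κ → S) R →ₐ[R] Matrix (ι → S) (ι → S) R :=
  AlgHom.ofLinearMap
    { toFun := localOp f
      map_add' := localOp_add
      map_smul' := localOp_smul }
    (localOp_one hf) (localOp_mul hf)

lemma localOpAlgHom_apply [Fintype ι] [DecidableEq ι] [Fintype κ] [DecidableEq κ] [Fintype S]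
    [DecidableEq S] [CommSemiring R] (hf : Injective f) (A : Matrix (κ → S) (κ → S) R) :
    localOpAlgHom R hf A = localOp f A := rfl

lemma localOp_mulVec [Fintype ι] [DecidableEq ι] [Fintype κ] [DecidableEq κ] [Fintype S]
    [NonUnitalNonAssocSemiring R] (hf : Injective f) (A : Matrix (κ → S) (κ → S) R)
    (ψ : (ι → S) → R) (x : ι → S) :
    (localOp f A *ᵥ ψ) x = (A *ᵥ fun u => ψ (extend f u x)) (x ∘ f) := by
  simp only [Matrix.mulVec, dotProduct, localOp, Matrix.of_apply]
  rw [sum_eq_sum_extend hf x _ fun z hz => by rw [if_neg hz, zero_mul]]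
  refine Finset.sum_congr rfl fun u _ => ?_
  have hx : ∀ k ∉ Set.range f, x k = extend f u x k :=
    fun k hk => (extend_apply' _ _ _ hk).symm
  simp only [if_pos hx, extend_comp hf]

end LocalOperators

section Models

open GaussianInt

variable {R : Type*} {n : ℕ} [NeZero n]

def spinSumOver [AddMonoid R] (A : Matrix (Fin 2) (Fin 2) R) (j : ZMod n) :
    Matrix (ZMod n → Fin 2) (ZMod n → Fin 2) R :=
  siteOpOver A j + siteOpOver A (j + 1) + siteOpOver A (j + 2)

variable (n) in
def bondOp (j : ZMod n) : Matrix (ZMod n → Fin 2) (ZMod n → Fin 2) ℂ :=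
  spinSumOver pauliX j ^ 2 + spinSumOver pauliY j ^ 2 + spinSumOver pauliZ j ^ 2 - 3

lemma smul_bondOp (j : ZMod n) :
    ((1 : ℂ) / 4) • bondOp n j =
      ((1 : ℂ) / 4) • (spinSumOver pauliX j ^ 2 + spinSumOver pauliY j ^ 2 +
        spinSumOver pauliZ j ^ 2) - ((3 : ℂ) / 4) • 1 := by
  rw [bondOp, smul_sub, show ((3 : ℂ) / 4) = 1 / 4 * 3 by ring, mul_smul,
    ofNat_smul_eq_nsmul ℂ 3, nsmul_one, Nat.cast_ofNat]

-- Models over `ℤ[i]`, on which the finite identities below can be checked by `decide`.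
def pauliXZi : Matrix (Fin 2) (Fin 2) GaussianInt := !![0, 1; 1, 0]
def pauliYZi : Matrix (Fin 2) (Fin 2) GaussianInt := !![0, -⟨0, 1⟩; ⟨0, 1⟩, 0]
def pauliZZi : Matrix (Fin 2) (Fin 2) GaussianInt := !![1, 0; 0, -1]

variable (n) in
def bondOpZi (j : ZMod n) : Matrix (ZMod n → Fin 2) (ZMod n → Fin 2) GaussianInt :=
  spinSumOver pauliXZi j ^ 2 + spinSumOver pauliYZi j ^ 2 + spinSumOver pauliZZi j ^ 2 - 3

def singletZi (a b : Fin 2) : GaussianInt :=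
  if a = 0 ∧ b = 1 then 1 else if a = 1 ∧ b = 0 then -1 else 0

lemma map_spinSumOver (A : Matrix (Fin 2) (Fin 2) GaussianInt) (j : ZMod n) :
    (spinSumOver A j).map toComplex = spinSumOver (A.map toComplex) j := by
  simp only [spinSumOver, Matrix.map_add _ (map_add toComplex),
    map_siteOpOver _ (map_zero toComplex)]

lemma map_bondOpZi (j : ZMod n) : (bondOpZi n j).map toComplex = bondOp n j := by
  have hX : pauliXZi.map toComplex = pauliX := by
    ext a b; fin_cases a <;> fin_cases b <;> simp [pauliXZi, pauliX]
  have hY : pauliYZi.map toComplex = pauliY := by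
    ext a b; fin_cases a <;> fin_cases b <;> simp [pauliYZi, pauliY, toComplex_def']
  have hZ : pauliZZi.map toComplex = pauliZ := by
    ext a b; fin_cases a <;> fin_cases b <;> simp [pauliZZi, pauliZ]
  rw [← RingHom.mapMatrix_apply, bondOpZi, bondOp]
  simp only [map_sub, map_add, map_pow, map_ofNat, RingHom.mapMatrix_apply, map_spinSumOver,
    hX, hY, hZ]

lemma singletAmp_eq (a b : Fin 2) :
    singletAmp a b = (√2 : ℂ)⁻¹ * toComplex (singletZi a b) := by
  fin_cases a <;> fin_cases b <;> simp [singletAmp, singletZi]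

end Models

section Computations

set_option maxRecDepth 100000
set_option maxHeartbeats 4000000

lemma conjTranspose_bondOpZi_three : (bondOpZi 3 0)ᴴ = bondOpZi 3 0 := by decide

lemma bondOpZi_three_mul_self : bondOpZi 3 0 * bondOpZi 3 0 = 12 • bondOpZi 3 0 := by decide

lemma bondOpZi_three_mulVec_singlet (p : ZMod 3) (b : Fin 2) :
    bondOpZi 3 0 *ᵥ (fun u => singletZi (u p) (u (p + 1)) * if u (p + 2) = b then 1 else 0) =
      0 := by
  revert p b; decide

lemma conjTranspose_bondOpZi_two (j : ZMod 2) : (bondOpZi 2 j)ᴴ = bondOpZi 2 j := by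
  revert j; decide

lemma bondOpZi_two_mul_self (j : ZMod 2) : bondOpZi 2 j * bondOpZi 2 j = 16 • bondOpZi 2 j := by
  revert j; decide

lemma bondOpZi_two_mulVec_singlet (j o : ZMod 2) :
    bondOpZi 2 j *ᵥ (fun x => singletZi (x o) (x (o + 1))) = 0 := by
  revert j o; decide

end Computations

section Transfer

open GaussianInt

variable {m : Type*}

lemma posSemidef_of_isHermitian_of_mul_self_eq_nsmul [Fintype m] {B : Matrix m m ℂ}
    (hB : B.IsHermitian) {c : ℕ} (hc : 0 < c) (h : B * B = c • B) : B.PosSemidef := by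
  have hBc : B = (c : ℝ)⁻¹ • (Bᴴ * B) := by
    rw [hB.eq, h, ← Nat.cast_smul_eq_nsmul ℝ, smul_smul, inv_mul_cancel₀ (by positivity),
      one_smul]
  rw [hBc]
  exact (Matrix.posSemidef_conjTranspose_mul_self B).smul (by positivity)

lemma isHermitian_map_toComplex {M : Matrix m m GaussianInt} (hM : Mᴴ = M) :
    (M.map toComplex).IsHermitian := by
  rw [Matrix.IsHermitian, ← Matrix.conjTranspose_map _ fun x => toComplex_star x, hM]

lemma map_toComplex_mul_self [Fintype m] [DecidableEq m] {M : Matrix m m GaussianInt} {c : ℕ}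
    (h : M * M = c • M) : M.map toComplex * M.map toComplex = c • M.map toComplex := by
  simp only [← RingHom.mapMatrix_apply, ← map_mul, h, map_nsmul]

lemma map_toComplex_mulVec_eq_zero [Fintype m] {M : Matrix m m GaussianInt} {v : m → GaussianInt}
    (h : M *ᵥ v = 0) : M.map toComplex *ᵥ (toComplex ∘ v) = 0 := by
  funext i
  rw [← RingHom.map_mulVec, h, Pi.zero_apply, map_zero, Pi.zero_apply]

end Transfer

lemma isHermitian_bondOp_three : (bondOp 3 0).IsHermitian := by
  rw [← map_bondOpZi]
  exact isHermitian_map_toComplex conjTranspose_bondOpZi_three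

lemma bondOp_three_mul_self : bondOp 3 0 * bondOp 3 0 = 12 • bondOp 3 0 := by
  rw [← map_bondOpZi]
  exact map_toComplex_mul_self bondOpZi_three_mul_self

lemma posSemidef_bondOp_two (j : ZMod 2) : (bondOp 2 j).PosSemidef := by
  rw [← map_bondOpZi]
  exact posSemidef_of_isHermitian_of_mul_self_eq_nsmul
    (isHermitian_map_toComplex (conjTranspose_bondOpZi_two j)) (by norm_num)
    (map_toComplex_mul_self (bondOpZi_two_mul_self j))

lemma bondOp_three_mulVec_singlet (p : ZMod 3) (g : Fin 2 → ℂ) :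
    bondOp 3 0 *ᵥ (fun u => singletAmp (u p) (u (p + 1)) * g (u (p + 2))) = 0 := by
  have hdecomp : (fun u : ZMod 3 → Fin 2 => singletAmp (u p) (u (p + 1)) * g (u (p + 2))) =
      ∑ b, ((√2 : ℂ)⁻¹ * g b) • (GaussianInt.toComplex ∘
        fun u => singletZi (u p) (u (p + 1)) * if u (p + 2) = b then 1 else 0) := by
    funext u
    simp only [Finset.sum_apply, Pi.smul_apply, Function.comp_apply, map_mul, smul_eq_mul,
      singletAmp_eq, Fin.sum_univ_two]
    rcases Fin.exists_fin_two.mp ⟨u (p + 2), rfl⟩ with h | h <;> simp [h] <;> ring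
  rw [hdecomp, Matrix.mulVec_sum, ← map_bondOpZi]
  refine Finset.sum_eq_zero fun b _ => ?_
  rw [Matrix.mulVec_smul, map_toComplex_mulVec_eq_zero (bondOpZi_three_mulVec_singlet p b),
    smul_zero]

lemma bondOp_two_mulVec_singlet (j o : ZMod 2) :
    bondOp 2 j *ᵥ (fun x => singletAmp (x o) (x (o + 1))) = 0 := by
  have hv : (fun x : ZMod 2 → Fin 2 => singletAmp (x o) (x (o + 1))) =
      (√2 : ℂ)⁻¹ • (GaussianInt.toComplex ∘ fun x => singletZi (x o) (x (o + 1))) := by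
    funext x
    simp [singletAmp_eq]
  rw [hv, Matrix.mulVec_smul, ← map_bondOpZi,
    map_toComplex_mulVec_eq_zero (bondOpZi_two_mulVec_singlet j o), smul_zero]

section Chain

variable {n : ℕ}

def triple (j : ZMod n) : ZMod 3 → ZMod n := fun i => j + (i.val : ZMod n)

lemma triple_zero (j : ZMod n) : triple j 0 = j := by
  rw [triple, ZMod.val_zero, Nat.cast_zero, add_zero]

lemma triple_one (j : ZMod n) : triple j 1 = j + 1 := by
  rw [triple, show (1 : ZMod 3).val = 1 from rfl, Nat.cast_one]

lemma triple_two (j : ZMod n) : triple j 2 = j + 2 := by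
  rw [triple, show (2 : ZMod 3).val = 2 from rfl, Nat.cast_ofNat]

lemma triple_injective (hn : 3 ≤ n) (j : ZMod n) : Injective (triple j) := by
  intro a b hab
  have hval := congrArg ZMod.val (add_left_cancel hab)
  rw [ZMod.val_natCast_of_lt (by have := a.val_lt; omega),
    ZMod.val_natCast_of_lt (by have := b.val_lt; omega)] at hval
  exact ZMod.val_injective 3 hval

variable [NeZero n]

lemma localOp_spinSumOver (hn : 3 ≤ n) (j : ZMod n) (A : Matrix (Fin 2) (Fin 2) ℂ) :
    localOp (triple j) (spinSumOver A 0) = spinSumOver A j := by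
  simp only [spinSumOver, zero_add, localOp_add, localOp_siteOpOver (triple_injective hn j),
    triple_zero, triple_one, triple_two]

lemma bondOp_eq_localOp (hn : 3 ≤ n) (j : ZMod n) :
    bondOp n j = localOp (triple j) (bondOp 3 0) := by
  rw [← localOpAlgHom_apply (triple_injective hn j), bondOp, bondOp]
  simp only [map_sub, map_add, map_pow, map_ofNat, localOpAlgHom_apply, localOp_spinSumOver hn]

lemma posSemidef_bondOp (hn : 2 ≤ n) (j : ZMod n) : (bondOp n j).PosSemidef := by
  obtain rfl | hn := (by omega : n = 2 ∨ 3 ≤ n)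
  · exact posSemidef_bondOp_two j
  rw [bondOp_eq_localOp hn]
  refine posSemidef_of_isHermitian_of_mul_self_eq_nsmul (c := 12) ?_ (by norm_num) ?_
  · rw [Matrix.IsHermitian, ← localOp_conjTranspose, isHermitian_bondOp_three.eq]
  · rw [← localOp_mul (triple_injective hn j), bondOp_three_mul_self, localOp_smul]

lemma bondOp_mulVec_eq_zero_of_singlet (hn : 3 ≤ n) (j a : ZMod n) (ha : a = j ∨ a = j + 1)
    (Φ : (ZMod n → Fin 2) → ℂ)
    (hΦ : ∀ y y', (∀ m, m ≠ a → m ≠ a + 1 → y m = y' m) → Φ y = Φ y') :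
    bondOp n j *ᵥ (fun y => singletAmp (y a) (y (a + 1)) * Φ y) = 0 := by
  have hf := triple_injective hn j
  have hcover : ∀ p i : ZMod 3, i ≠ p → i ≠ p + 1 → i = p + 2 := by decide
  obtain ⟨p, hp, hp1⟩ : ∃ p, triple j p = a ∧ triple j (p + 1) = a + 1 := by
    rcases ha with rfl | rfl
    · exact ⟨0, triple_zero a, by rw [zero_add, triple_one]⟩
    · exact ⟨1, triple_one j, by rw [one_add_one_eq_two, triple_two, add_assoc,
        one_add_one_eq_two]⟩
  rw [bondOp_eq_localOp hn]
  funext x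
  rw [localOp_mulVec hf]
  have hlocal : (fun u => singletAmp (extend (triple j) u x a)
      (extend (triple j) u x (a + 1)) * Φ (extend (triple j) u x)) =
      fun u => singletAmp (u p) (u (p + 1)) *
        (fun c => Φ (extend (triple j) (fun _ => c) x)) (u (p + 2)) := by
    funext u
    rw [← hp1, ← hp, hf.extend_apply, hf.extend_apply]
    congr 1
    refine hΦ _ _ fun m hm hm1 => ?_
    by_cases hr : m ∈ Set.range (triple j)
    · obtain ⟨i, rfl⟩ := hr
      rw [hf.extend_apply, hf.extend_apply,
        hcover p i (fun h => hm (by rw [h, hp])) (fun h => hm1 (by rw [h, hp1]))]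
    · rw [extend_apply' _ _ _ hr, extend_apply' _ _ _ hr]
  rw [hlocal, bondOp_three_mulVec_singlet p fun c => Φ (extend (triple j) (fun _ => c) x)]
  rfl

end Chain

section Dimer

variable {N : ℕ}

variable (N) in
def dimerState (o : ZMod (2 * N)) : (ZMod (2 * N) → Fin 2) → ℂ := fun x =>
  ∏ i ∈ Finset.range N, singletAmp (x (o + 2 * i)) (x (o + 2 * i + 1))

lemma exists_dimer_bond [NeZero (2 * N)] (o j : ZMod (2 * N)) :
    ∃ k < N, o + 2 * k = j ∨ o + 2 * k = j + 1 := by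
  have hN : 0 < N := by have := NeZero.ne (2 * N); omega
  obtain ⟨q, hq | hq⟩ := Nat.even_or_odd' (j - o).val
  · refine ⟨q, by have := (j - o).val_lt; omega, Or.inl ?_⟩
    have : ((2 * q : ℕ) : ZMod (2 * N)) = j - o := by rw [← hq, ZMod.natCast_zmod_val]
    push_cast at this
    rw [this, add_sub_cancel]
  · have hqN : q + 1 ≤ N := by have := (j - o).val_lt; omega
    have : ((2 * q + 1 : ℕ) : ZMod (2 * N)) = j - o := by rw [← hq, ZMod.natCast_zmod_val]
    push_cast at this
    obtain hlt | heq := hqN.lt_or_eq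
    · refine ⟨q + 1, hlt, Or.inr ?_⟩
      push_cast
      linear_combination this
    · refine ⟨0, hN, Or.inr ?_⟩
      have h2N : ((2 * (q + 1) : ℕ) : ZMod (2 * N)) = 0 := by rw [heq, ZMod.natCast_self]
      push_cast at h2N
      linear_combination this - h2N

lemma dimer_sites_ne {i k : ℕ} (hi : i < N) (hk : k < N) (hik : i ≠ k) (o : ZMod (2 * N))
    {b c : ℕ} (hb : b < 2) (hc : c < 2) : o + 2 * i + b ≠ o + 2 * k + c := by
  intro h
  have hcast : ((2 * i + b : ℕ) : ZMod (2 * N)) = ((2 * k + c : ℕ) : ZMod (2 * N)) := by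
    push_cast
    linear_combination h
  have := congrArg ZMod.val hcast
  rw [ZMod.val_natCast_of_lt (by omega), ZMod.val_natCast_of_lt (by omega)] at this
  omega

lemma bondOp_mulVec_dimerState_of_two_le [NeZero (2 * N)] (hN : 2 ≤ N) (o j : ZMod (2 * N)) :
    bondOp (2 * N) j *ᵥ dimerState N o = 0 := by
  obtain ⟨k, hk, hjk⟩ := exists_dimer_bond o j
  have hsplit : dimerState N o = fun y => singletAmp (y (o + 2 * k)) (y (o + 2 * k + 1)) *
      ∏ i ∈ (Finset.range N).erase k, singletAmp (y (o + 2 * i)) (y (o + 2 * i + 1)) :=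
    funext fun y => (Finset.mul_prod_erase _ _ (Finset.mem_range.mpr hk)).symm
  rw [hsplit]
  refine bondOp_mulVec_eq_zero_of_singlet (by omega) j _ hjk _ fun y y' hyy' => ?_
  refine Finset.prod_congr rfl fun i hi => ?_
  obtain ⟨hik, hi⟩ := Finset.mem_erase.mp hi
  have hne := fun b c (hb : b < 2) (hc : c < 2) =>
    dimer_sites_ne (Finset.mem_range.mp hi) hk hik o hb hc
  rw [hyy' _ (by simpa using hne 0 0) (by simpa using hne 0 1),
    hyy' _ (by simpa using hne 1 0) (by simpa using hne 1 1)]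

lemma dimerState_one (o : ZMod (2 * 1)) :
    dimerState 1 o = fun x => singletAmp (x o) (x (o + 1)) := by
  funext x
  simp [dimerState]

lemma bondOp_mulVec_dimerState [NeZero (2 * N)] (o j : ZMod (2 * N)) :
    bondOp (2 * N) j *ᵥ dimerState N o = 0 := by
  obtain rfl | hN := (by have := NeZero.ne (2 * N); omega : N = 1 ∨ 2 ≤ N)
  · rw [dimerState_one]
    exact bondOp_two_mulVec_singlet j o
  · exact bondOp_mulVec_dimerState_of_two_le hN o j

lemma dimerState_ne_zero (o : ZMod (2 * N)) : dimerState N o ≠ 0 := by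
  set x : ZMod (2 * N) → Fin 2 := fun m => if Even (m - o).val then 0 else 1
  have hx : ∀ i < N, x (o + 2 * i) = 0 ∧ x (o + 2 * i + 1) = 1 := by
    intro i hi
    have h0 : o + 2 * i - o = ((2 * i : ℕ) : ZMod (2 * N)) := by push_cast; ring
    have h1 : o + 2 * i + 1 - o = ((2 * i + 1 : ℕ) : ZMod (2 * N)) := by push_cast; ring
    simp only [x, h0, h1, ZMod.val_natCast_of_lt (by omega : 2 * i < 2 * N),
      ZMod.val_natCast_of_lt (by omega : 2 * i + 1 < 2 * N)]
    exact ⟨if_pos (even_two_mul i), if_neg (Nat.not_even_two_mul_add_one i)⟩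
  intro h
  refine Finset.prod_ne_zero_iff.mpr (fun i hi => ?_) (congrFun h x)
  obtain ⟨h0, h1⟩ := hx i (Finset.mem_range.mp hi)
  simp [h0, h1, singletAmp]

end Dimer

/-- **Majumdar–Ghosh positivity and dimer ground states.**
On `(ℂ²)^{⊗2N}` with periodic boundary conditions, the operator
`H = Σ_j [ (1/4)(σ⃗_j + σ⃗_{j+1} + σ⃗_{j+2})² − 3/4 ]` is positive semidefinite,
and the two (nonzero) dimer states—tensor products of nearest-neighbour
singlets on the odd, respectively even, bonds—are annihilated by `H`; hence
they are ground states with ground energy `0`. -/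
theorem stmt16 (N : ℕ) (hN : 0 < N) :
    letI : NeZero (2 * N) := ⟨by omega⟩
    let tot : Matrix (Fin 2) (Fin 2) ℂ → ZMod (2 * N) →
        Matrix ((ZMod (2 * N) → Fin 2)) ((ZMod (2 * N) → Fin 2)) ℂ :=
      fun A j => siteOp A j + siteOp A (j + 1) + siteOp A (j + 2)
    let H := ∑ j : ZMod (2 * N),
      (((1 : ℂ) / 4) • (tot pauliX j ^ 2 + tot pauliY j ^ 2 + tot pauliZ j ^ 2)
        - ((3 : ℂ) / 4) • (1 : Matrix ((ZMod (2 * N) → Fin 2)) ((ZMod (2 * N) → Fin 2)) ℂ))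
    let ψo : (ZMod (2 * N) → Fin 2) → ℂ := fun x =>
      ∏ j ∈ Finset.range N,
        singletAmp (x ((2 * j : ℕ) : ZMod (2 * N))) (x ((2 * j + 1 : ℕ) : ZMod (2 * N)))
    let ψe : (ZMod (2 * N) → Fin 2) → ℂ := fun x =>
      ∏ j ∈ Finset.range N,
        singletAmp (x ((2 * j + 1 : ℕ) : ZMod (2 * N))) (x ((2 * j + 2 : ℕ) : ZMod (2 * N)))
    H.PosSemidef ∧ H.mulVec ψo = 0 ∧ H.mulVec ψe = 0 ∧ ψo ≠ 0 ∧ ψe ≠ 0 := by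
  have : NeZero (2 * N) := ⟨by omega⟩
  intro tot H ψo ψe
  have hH : H = ∑ j, ((1 : ℂ) / 4) • bondOp (2 * N) j :=
    Finset.sum_congr rfl fun j _ => (smul_bondOp j).symm
  have hψo : ψo = dimerState N 0 :=
    funext fun x => Finset.prod_congr rfl fun i _ => by push_cast; ring_nf
  have hψe : ψe = dimerState N 1 :=
    funext fun x => Finset.prod_congr rfl fun i _ => by push_cast; ring_nf
  have hkernel : ∀ o, H *ᵥ dimerState N o = 0 := fun o => by
    simp only [hH, Matrix.sum_mulVec, Matrix.smul_mulVec, bondOp_mulVec_dimerState, smul_zero,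
      Finset.sum_const_zero]
  rw [hψo, hψe]
  refine ⟨?_, hkernel 0, hkernel 1, dimerState_ne_zero 0, dimerState_ne_zero 1⟩
  rw [hH]
  exact Matrix.posSemidef_sum _ fun j _ =>
    (posSemidef_bondOp (by omega) j).smul (by positivity)
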